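/- Let u : ℕ → ℝ be defined by u_k = 1 + (−1)^k + k² if k = n² for some n ∈ ℕ, u_k = 1 + (−1)^k − (k−1)² if k = n² + 1 for some n ∈ ℕ, and u_k = 1 + (−1)^k otherwise, and let σ_k = (1/k)∑_{j=1}^k u_j. Then for every t > 0, the real sequences μ₀(σ_k − 1, t) and ν₀(σ_k − 1, t) are statistically convergent to 1 and 0 respectively; that is, (u_k) is statistically Cesàro summable to 1 in the IF-normed space (ℝ, μ₀, ν₀). -/

import Mathlib

open Filter

/-- The standard intuitionistic fuzzy norm membership function on `ℝ`. -/
noncomputable def mu0 (u t : ℝ) : ℝ := if t ≤ 0 then 0 else t / (t + |u|)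

/-- The standard intuitionistic fuzzy norm non-membership function on `ℝ`. -/
noncomputable def nu0 (u t : ℝ) : ℝ := if t ≤ 0 then 1 else |u| / (t + |u|)

open Classical in
/-- Statistical convergence of a real sequence. -/
def StatConvReal (x : ℕ → ℝ) (L : ℝ) : Prop :=
  ∀ ε > (0 : ℝ),
    Tendsto (fun n : ℕ =>
      (((Finset.Icc 1 n).filter (fun k => ε ≤ |x k - L|)).card : ℝ) / n)
      atTop (nhds 0)

open Classical in
/-- The sequence of Example 1. -/
noncomputable def uEx (k : ℕ) : ℝ :=
  if ∃ n : ℕ, k = n ^ 2 then 1 + (-1 : ℝ) ^ k + (k : ℝ) ^ 2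
  else if ∃ n : ℕ, k = n ^ 2 + 1 then 1 + (-1 : ℝ) ^ k - ((k : ℝ) - 1) ^ 2
  else 1 + (-1 : ℝ) ^ k

/-- Cesàro means of the sequence of Example 1. -/
noncomputable def sigmaEx (k : ℕ) : ℝ := (k : ℝ)⁻¹ * ∑ j ∈ Finset.Icc 1 k, uEx j

/-!
With `c k = k²` for a square `k` and `0` otherwise, `u (k + 1) = 1 + (-1)^(k+1) + c (k + 1) - c k`
(the only consecutive squares are `0` and `1`), so the partial sums telescope to
`k + ((-1)^k - 1)/2 + c k`. Off the squares this gives `|σ_k - 1| ≤ 1/k`. The squares have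
natural density zero, and for `t > 0` both `μ₀(·, t)` and `ν₀(·, t)` are continuous at `0`, so
the exceptional sets of the two statistical limits lie in the squares plus a finite set.
-/

open Finset Topology

open Classical in
def DensityZero (S : Set ℕ) : Prop :=
  Tendsto (fun n : ℕ => ((#{k ∈ Icc 1 n | k ∈ S} : ℕ) : ℝ) / n) atTop (𝓝 0)

theorem DensityZero.mono {S T : Set ℕ} (hT : DensityZero T) (hST : S ⊆ T) : DensityZero S := by
  classical
  refine squeeze_zero (fun n => by positivity) (fun n => ?_) hT
  gcongr

theorem DensityZero.union {S T : Set ℕ} (hS : DensityZero S) (hT : DensityZero T) :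
    DensityZero (S ∪ T) := by
  classical
  refine squeeze_zero (fun n => by positivity) (fun n => ?_) (by simpa using hS.add hT)
  rw [← add_div]
  gcongr
  refine mod_cast (Finset.card_le_card fun k hk => ?_).trans (card_union_le _ _)
  simp only [mem_union, mem_filter, Set.mem_union] at hk ⊢
  tauto

theorem Set.Finite.densityZero {S : Set ℕ} (hS : S.Finite) : DensityZero S := by
  classical
  refine squeeze_zero (fun n => by positivity) (fun n => ?_)
    (tendsto_const_div_atTop_nhds_zero_nat (#hS.toFinset : ℝ))
  gcongr
  exact fun k hk => by simpa using (mem_filter.1 hk).2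

theorem tendsto_nat_sqrt_div_atTop :
    Tendsto (fun n : ℕ => (Nat.sqrt n : ℝ) / n) atTop (𝓝 0) := by
  have h : Tendsto (fun n : ℕ => 1 / √(n : ℝ)) atTop (𝓝 0) := by
    simpa only [one_div, Function.comp_def] using
      tendsto_inv_atTop_zero.comp (Real.tendsto_sqrt_atTop.comp tendsto_natCast_atTop_atTop)
  refine squeeze_zero (fun n => by positivity) (fun n => ?_) h
  rw [← Real.sqrt_div_self']
  gcongr
  exact Real.nat_sqrt_le_real_sqrt

theorem densityZero_squares : DensityZero {k | ∃ m : ℕ, k = m ^ 2} := by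
  classical
  refine squeeze_zero (fun n => by positivity) (fun n => ?_) tendsto_nat_sqrt_div_atTop
  gcongr
  calc #{k ∈ Icc 1 n | k ∈ {k | ∃ m : ℕ, k = m ^ 2}}
      ≤ #((Icc 1 (Nat.sqrt n)).image (· ^ 2)) := by
        refine Finset.card_le_card fun k hk => ?_
        obtain ⟨hk, m, rfl⟩ := mem_filter.1 hk
        rw [mem_Icc] at hk
        refine mem_image.2 ⟨m, mem_Icc.2 ⟨?_, Nat.le_sqrt'.2 hk.2⟩, rfl⟩
        rcases m with _ | m <;> simp_all
    _ ≤ Nat.sqrt n := card_image_le.trans (by simp)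

theorem StatConvReal.of_tendsto_inf_principal {x : ℕ → ℝ} {L : ℝ} {S : Set ℕ}
    (hS : DensityZero S) (hx : Tendsto x (atTop ⊓ 𝓟 Sᶜ) (𝓝 L)) : StatConvReal x L := by
  intro ε hε
  obtain ⟨N, hN⟩ := eventually_atTop.1 <| eventually_inf_principal.1 <|
    hx.eventually (Metric.ball_mem_nhds L hε)
  have hsub : {k | ε ≤ |x k - L|} ⊆ S ∪ Set.Iio N := fun k hk => by
    by_contra h
    simp only [Set.mem_union, Set.mem_Iio, not_or, not_lt] at h
    exact (not_lt.2 hk) (hN k h.2 h.1)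
  exact (hS.union (Set.finite_Iio N).densityZero).mono hsub

theorem Nat.eq_zero_of_sq_add_one_eq_sq {a b : ℕ} (h : a ^ 2 + 1 = b ^ 2) : a = 0 := by
  have hab : a + 1 ≤ b := by
    by_contra! hba
    nlinarith [Nat.pow_le_pow_left (Nat.le_of_lt_succ hba) 2]
  nlinarith [Nat.pow_le_pow_left hab 2]

open Classical in
noncomputable def squareJump (k : ℕ) : ℝ := if ∃ n : ℕ, k = n ^ 2 then (k : ℝ) ^ 2 else 0

theorem uEx_succ (k : ℕ) :
    uEx (k + 1) = 1 + (-1) ^ (k + 1) + squareJump (k + 1) - squareJump k := by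
  by_cases hk : ∃ n : ℕ, k = n ^ 2
  · have hk' : ∃ n : ℕ, k + 1 = n ^ 2 + 1 := hk.imp fun n h => by rw [h]
    by_cases hk1 : ∃ n : ℕ, k + 1 = n ^ 2
    · obtain ⟨m, rfl⟩ := hk
      obtain ⟨n, hn⟩ := hk1
      obtain rfl := Nat.eq_zero_of_sq_add_one_eq_sq hn
      norm_num [uEx, squareJump]
    · simp only [uEx, squareJump, if_neg hk1, if_pos hk', if_pos hk]
      push_cast
      ring
  · have hk' : ¬ ∃ n : ℕ, k + 1 = n ^ 2 + 1 := fun ⟨n, hn⟩ => hk ⟨n, by omega⟩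
    by_cases hk1 : ∃ n : ℕ, k + 1 = n ^ 2
    · simp only [uEx, squareJump, if_pos hk1, if_neg hk]
      ring
    · simp only [uEx, squareJump, if_neg hk1, if_neg hk', if_neg hk]
      ring

theorem sum_uEx (k : ℕ) :
    ∑ j ∈ Icc 1 k, uEx j = k + ((-1) ^ k - 1) / 2 + squareJump k := by
  induction k with
  | zero => simp [squareJump]
  | succ k ih =>
    rw [sum_Icc_succ_top (by omega), ih, uEx_succ]
    push_cast
    ring

theorem sigmaEx_sub_one_of_not_sq {k : ℕ} (hk : ¬ ∃ n : ℕ, k = n ^ 2) :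
    sigmaEx k - 1 = ((-1) ^ k - 1) / (2 * k) := by
  have hk0 : (k : ℝ) ≠ 0 := by
    rintro h
    exact hk ⟨0, by exact_mod_cast h⟩
  rw [sigmaEx, sum_uEx, squareJump, if_neg hk]
  field_simp
  ring

theorem tendsto_sigmaEx_off_squares :
    Tendsto sigmaEx (atTop ⊓ 𝓟 {k | ∃ n : ℕ, k = n ^ 2}ᶜ) (𝓝 1) := by
  rw [tendsto_iff_norm_sub_tendsto_zero]
  refine squeeze_zero_norm' ?_ ((tendsto_const_div_atTop_nhds_zero_nat 1).mono_left inf_le_left)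
  refine eventually_inf_principal.2 (Eventually.of_forall fun k hk => ?_)
  have hnum : |(-1 : ℝ) ^ k - 1| ≤ 2 := by
    rcases neg_one_pow_eq_or ℝ k with h | h <;> norm_num [h]
  calc ‖‖sigmaEx k - 1‖‖ = |(-1 : ℝ) ^ k - 1| / (2 * k) := by
        rw [norm_norm, Real.norm_eq_abs, sigmaEx_sub_one_of_not_sq hk, abs_div,
          abs_of_nonneg (by positivity : (0 : ℝ) ≤ 2 * k)]
    _ ≤ 2 / (2 * k) := by gcongr
    _ = 1 / k := by rw [div_mul_cancel_left₀ two_ne_zero, one_div]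

theorem continuous_mu0 {t : ℝ} (ht : 0 < t) : Continuous fun u => mu0 u t := by
  simp only [mu0, if_neg ht.not_ge]
  exact continuous_const.div (by fun_prop) fun u => by positivity

theorem continuous_nu0 {t : ℝ} (ht : 0 < t) : Continuous fun u => nu0 u t := by
  simp only [nu0, if_neg ht.not_ge]
  exact (by fun_prop : Continuous fun u : ℝ => |u|).div (by fun_prop) fun u => by positivity

theorem uEx_statistically_cesaro_summable_to_one :
    ∀ t > (0 : ℝ),
      StatConvReal (fun k => mu0 (sigmaEx k - 1) t) 1 ∧
      StatConvReal (fun k => nu0 (sigmaEx k - 1) t) 0 := by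
  intro t ht
  have hσ : Tendsto (sigmaEx · - 1) (atTop ⊓ 𝓟 {k | ∃ n : ℕ, k = n ^ 2}ᶜ) (𝓝 0) := by
    simpa using tendsto_sigmaEx_off_squares.sub_const 1
  have hμ : mu0 0 t = 1 := by simp [mu0, ht.not_ge, ht.ne']
  have hν : nu0 0 t = 0 := by simp [nu0, ht.not_ge]
  exact ⟨.of_tendsto_inf_principal densityZero_squares
      (((continuous_mu0 ht).tendsto' 0 1 hμ).comp hσ),
    .of_tendsto_inf_principal densityZero_squares
      (((continuous_nu0 ht).tendsto' 0 0 hν).comp hσ)⟩
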